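/- There exists an infinite phylogenetic network G such that for every k ≥ 0 the restriction [G]_k satisfies B₂([G]_k) = 1 if k is odd and B₂([G]_k) = 0 if k is even; in particular, the sequence (B₂([G]_k))_{k≥0} does not converge. -/

import Mathlib

/-!
The network is an infinite chain of diamonds on `ℕ`: the vertex `3m` has the two children
`3m + 1` and `3m + 2`, each of which has the single child `3m + 3`. Every edge raises
`level n = 2 (n / 3) + (n % 3 + 1) / 2` by one, so `level` is the height, a vertex of `[G]_k` is
reached only by paths of length `level n`, and the leaves of `[G]_k` are the vertices of level `k`.
Every edge carries probability `1/2` (the vertex `3m` has probability `1` and out-degree `2`, the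
others probability `1/2` and out-degree `1`), so each vertex has probability half its number of
parents. For even `k` the only leaf has probability `1`, so `B₂ = 0`; for odd `k` the two leaves
have probability `1/2` each, so `B₂ = 1`.
-/

open Finset

namespace GalledB2

structure Net (V : Type*) where
  adj : V → V → ℕ
  root : V

variable {V : Type*}

section Finite

variable [Fintype V]

def outDeg (G : Net V) (v : V) : ℕ := ∑ u, G.adj v u

def IsLeaf (G : Net V) (v : V) : Prop := outDeg G v = 0

open Classical in
noncomputable def pvisit (G : Net V) (v : V) : ℝ :=
  ∑ j ∈ Finset.range (Fintype.card V), ∑ f : Fin (j + 1) → V,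
    if f 0 = G.root ∧ f (Fin.last j) = v then
      ∏ i : Fin j, (G.adj (f i.castSucc) (f i.succ) : ℝ) / (outDeg G (f i.castSucc) : ℝ)
    else 0

open Classical in
noncomputable def B2 (G : Net V) : ℝ :=
  - ∑ v ∈ Finset.univ.filter (fun v => IsLeaf G v),
      pvisit G v * Real.logb 2 (pvisit G v)

end Finite

structure INet (V : Type*) where
  adj : V → V → Prop
  root : V

/-- `G` is a phylogenetic network: a locally finite DAG in which the root has
in-degree 0 and every vertex is reachable from the root. -/
def IsPhyloNet (G : INet V) : Prop :=
  (∀ v, {u | G.adj v u}.Finite ∧ {u | G.adj u v}.Finite) ∧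
  (∀ v, ¬ Relation.TransGen G.adj v v) ∧
  (∀ u, ¬ G.adj u G.root) ∧
  (∀ v, Relation.ReflTransGen G.adj G.root v)

/-- The height of a vertex: the minimal length of a directed path from the root. -/
noncomputable def height (G : INet V) (v : V) : ℕ :=
  sInf {n | ∃ f : ℕ → V, f 0 = G.root ∧ f n = v ∧ ∀ i < n, G.adj (f i) (f (i + 1))}

open Classical in
/-- The restriction `[G]_k` of `G` to its vertices of height at most `k`, as a finite
phylogenetic network (all edge multiplicities are 0 or 1 since `G` is a digraph). -/
noncomputable def restNet (G : INet V) (k : ℕ) : Net {v : V // height G v ≤ k} where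
  adj u v := if G.adj u.1 v.1 then 1 else 0
  root := ⟨G.root,
    le_trans
      (Nat.sInf_le ⟨fun _ => G.root, rfl, rfl, fun i hi => absurd hi (Nat.not_lt_zero i)⟩)
      (Nat.zero_le k)⟩

structure IsGrading (G : Net V) (ℓ : V → ℕ) : Prop where
  root : ℓ G.root = 0
  adj_ne_zero : ∀ {u v}, G.adj u v ≠ 0 → ℓ v = ℓ u + 1

section PathProb

variable [Fintype V]

noncomputable def edgeProb (G : Net V) (u v : V) : ℝ := (G.adj u v : ℝ) / (outDeg G u : ℝ)

open Classical in
noncomputable def pathProb (G : Net V) (j : ℕ) (v : V) : ℝ :=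
  ∑ f : Fin (j + 1) → V,
    if f 0 = G.root ∧ f (Fin.last j) = v then
      ∏ i : Fin j, edgeProb G (f i.castSucc) (f i.succ)
    else 0

lemma pvisit_eq_sum_pathProb (G : Net V) (v : V) :
    pvisit G v = ∑ j ∈ range (Fintype.card V), pathProb G j v := rfl

open Classical in
lemma pathProb_zero (G : Net V) (v : V) : pathProb G 0 v = if G.root = v then 1 else 0 := by
  rw [pathProb, ← (Equiv.funUnique (Fin 1) V).symm.sum_comp]
  simp [Fin.last, ite_and]

lemma pathProb_succ (G : Net V) (j : ℕ) (v : V) :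
    pathProb G (j + 1) v = ∑ u, pathProb G j u * edgeProb G u v := by
  classical
  simp only [pathProb, sum_mul, ite_mul, zero_mul]
  rw [← (Fin.snocEquiv fun _ => V).sum_comp, Fintype.sum_prod_type, sum_comm,
    sum_comm (γ := V)]
  refine sum_congr rfl fun g _ => ?_
  simp [Fin.prod_univ_castSucc, Fin.succ_castSucc, -Fin.castSucc_succ, ite_and]

variable {G : Net V} {ℓ : V → ℕ}

lemma IsGrading.edgeProb_ne_zero (hℓ : IsGrading G ℓ) {u v : V} (h : edgeProb G u v ≠ 0) :
    ℓ v = ℓ u + 1 :=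
  hℓ.adj_ne_zero fun h' => h (by simp [edgeProb, h'])

lemma IsGrading.pathProb_eq_zero (hℓ : IsGrading G ℓ) {j : ℕ} {v : V} (hv : ℓ v ≠ j) :
    pathProb G j v = 0 := by
  classical
  induction j generalizing v with
  | zero =>
    rw [pathProb_zero, if_neg]
    rintro rfl
    exact hv hℓ.root
  | succ j ih =>
    rw [pathProb_succ]
    refine sum_eq_zero fun u _ => ?_
    by_cases hu : ℓ u = j
    · by_contra h
      exact hv (hu ▸ hℓ.edgeProb_ne_zero (right_ne_zero_of_mul h))
    · rw [ih hu, zero_mul]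

lemma IsGrading.pvisit_eq_pathProb (hℓ : IsGrading G ℓ) {v : V} (hv : ℓ v < Fintype.card V) :
    pvisit G v = pathProb G (ℓ v) v := by
  rw [pvisit_eq_sum_pathProb]
  exact sum_eq_single_of_mem _ (mem_range.2 hv) fun j _ hj => hℓ.pathProb_eq_zero (Ne.symm hj)

lemma IsGrading.pathProb_eq_sum (hℓ : IsGrading G ℓ) {v : V} (hv : v ≠ G.root) :
    pathProb G (ℓ v) v = ∑ u, pathProb G (ℓ u) u * edgeProb G u v := by
  classical
  rcases hv' : ℓ v with _ | j
  · rw [pathProb_zero, if_neg (Ne.symm hv)]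
    refine (sum_eq_zero fun u _ => ?_).symm
    by_contra h
    have := hℓ.edgeProb_ne_zero (right_ne_zero_of_mul h)
    omega
  · rw [pathProb_succ]
    refine sum_congr rfl fun u _ => ?_
    by_cases hw : edgeProb G u v = 0
    · simp only [hw, mul_zero]
    · have := hℓ.edgeProb_ne_zero hw
      rw [show ℓ u = j by omega]

end PathProb

lemma sum_subtype_eq_sum_of_support {α M : Type*} [AddCommMonoid M] {p : α → Prop}
    [Fintype (Subtype p)] (s : Finset α) (g : α → M) (hs : ∀ a ∈ s, p a)
    (hg : ∀ a, p a → a ∉ s → g a = 0) :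
    ∑ u : Subtype p, g u = ∑ a ∈ s, g a := by
  classical
  rw [← sum_subtype_of_mem g hs]
  refine (sum_subset (s₁ := s.subtype p) (f := fun u => g u) (subset_univ _)
    fun u _ hu => hg u u.2 ?_).symm
  simpa using hu

section Restriction

variable {G : INet V} {k : ℕ}

lemma restNet_adj_ne_zero_iff {u v : {v : V // height G v ≤ k}} :
    (restNet G k).adj u v ≠ 0 ↔ G.adj u v := by
  simp [restNet]

variable [Fintype {v : V // height G v ≤ k}]

open Classical in
lemma outDeg_restNet (u : {v : V // height G v ≤ k}) :
    outDeg (restNet G k) u = ∑ v : {v : V // height G v ≤ k}, if G.adj u v then 1 else 0 := rfl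

open Classical in
lemma edgeProb_restNet (u v : {v : V // height G v ≤ k}) :
    edgeProb (restNet G k) u v = if G.adj u v then (outDeg (restNet G k) u : ℝ)⁻¹ else 0 := by
  simp only [edgeProb, restNet]
  split_ifs <;> simp

end Restriction

namespace DiamondChain

def Adj (n m : ℕ) : Prop :=
  (n % 3 = 0 ∧ (m = n + 1 ∨ m = n + 2)) ∨ (n % 3 = 1 ∧ m = n + 2) ∨
    (n % 3 = 2 ∧ m = n + 1)

def net : INet ℕ := ⟨Adj, 0⟩

def level (n : ℕ) : ℕ := 2 * (n / 3) + (n % 3 + 1) / 2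

lemma lt_of_adj {n m : ℕ} (h : Adj n m) : n < m := by
  unfold Adj at h; omega

lemma level_of_adj {n m : ℕ} (h : Adj n m) : level m = level n + 1 := by
  unfold Adj at h; unfold level; omega

lemma level_of_path {f : ℕ → ℕ} (h0 : f 0 = 0) {j : ℕ}
    (h : ∀ i < j, Adj (f i) (f (i + 1))) :
    level (f j) = j := by
  induction j with
  | zero => rw [h0]; rfl
  | succ j ih => rw [level_of_adj (h j j.lt_succ_self), ih fun i hi => h i (by omega)]

lemma exists_path (n : ℕ) :
    ∃ f : ℕ → ℕ, f 0 = 0 ∧ f (level n) = n ∧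
      ∀ i < level n, Adj (f i) (f (i + 1)) := by
  -- the path `0, 1, 3, 4, 6, 7, …` up to level `level n - 1`, then one step to `n`
  refine ⟨fun i => if i < level n then 3 * (i / 2) + i % 2 else n, ?_, by simp, ?_⟩
  · show (if 0 < level n then 0 else n) = 0
    split_ifs with h
    · rfl
    · unfold level at h; omega
  · intro i hi
    dsimp only
    split_ifs <;> unfold Adj <;> unfold level at * <;> omega

lemma height_net (n : ℕ) : height net n = level n := by
  unfold height
  refine le_antisymm (Nat.sInf_le (exists_path n)) (le_csInf ⟨_, exists_path n⟩ ?_)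
  rintro j ⟨f, h0, rfl, hf⟩
  exact (level_of_path h0 hf).le

lemma isPhyloNet_net : IsPhyloNet net := by
  refine ⟨fun v => ⟨?_, (Set.finite_Iio v).subset fun u => lt_of_adj⟩, fun v h => ?_,
    fun u h => Nat.not_lt_zero u (lt_of_adj h), fun n => ?_⟩
  · refine (Set.finite_Icc (v + 1) (v + 2)).subset fun u (hu : Adj v u) => ?_
    unfold Adj at hu
    simp only [Set.mem_Icc]
    omega
  · have : Relation.TransGen (· < ·) v v := Relation.TransGen.mono (fun _ _ => lt_of_adj) v v h
    rw [Relation.transGen_eq_self] at this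
    exact lt_irrefl v this
  · obtain ⟨f, h0, hn, hf⟩ := exists_path n
    have := (reflTransGen_of_succ_of_le (fun i j => Adj (f i) (f j))
      (fun i hi => hf i hi.2) (Nat.zero_le _)).lift f fun _ _ h => h
    rwa [Function.onFun, h0, hn] at this

def children (n : ℕ) : Finset ℕ := if n % 3 = 0 then {n + 1, n + 2} else {n + 3 - n % 3}

def parents (n : ℕ) : Finset ℕ := if n % 3 = 0 then {n - 2, n - 1} else {n - n % 3}

def levelSet (j : ℕ) : Finset ℕ :=
  if Even j then {3 * (j / 2)} else {3 * (j / 2) + 1, 3 * (j / 2) + 2}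

lemma mem_children {n m : ℕ} : m ∈ children n ↔ Adj n m := by
  unfold children Adj
  split_ifs <;> simp <;> omega

lemma mem_parents {n m : ℕ} (hn : n ≠ 0) : m ∈ parents n ↔ Adj m n := by
  unfold parents Adj
  split_ifs <;> simp <;> omega

lemma mem_levelSet {j n : ℕ} : n ∈ levelSet j ↔ level n = j := by
  unfold levelSet level
  split_ifs with h <;> simp [Nat.even_iff] at h ⊢ <;> omega

noncomputable def visitProb (n : ℕ) : ℝ := if n % 3 = 0 then 1 else 2⁻¹

lemma card_children (n : ℕ) : (children n).card = if n % 3 = 0 then 2 else 1 := by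
  unfold children
  split_ifs
  · exact Finset.card_pair (by omega)
  · rfl

lemma card_parents {n : ℕ} (hn : n ≠ 0) : (parents n).card = if n % 3 = 0 then 2 else 1 := by
  unfold parents
  split_ifs
  · exact Finset.card_pair (by omega)
  · rfl

lemma visitProb_div_card_children (n : ℕ) : visitProb n / (children n).card = 2⁻¹ := by
  rw [visitProb, card_children]
  split_ifs <;> norm_num

lemma visitProb_eq_card_parents_div_two {n : ℕ} (hn : n ≠ 0) :
    visitProb n = (parents n).card / 2 := by
  rw [visitProb, card_parents hn]
  split_ifs <;> norm_num

section Restriction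

variable {k : ℕ}

local notation "Sk" => {v : ℕ // height net v ≤ k}

lemma level_le (v : Sk) : level v ≤ k := height_net v ▸ v.2

lemma height_le_of_level_le {n : ℕ} (h : level n ≤ k) : height net n ≤ k :=
  (height_net n).symm ▸ h

lemma isGrading_restNet : IsGrading (restNet net k) (fun v => level v.1) :=
  ⟨show level 0 = 0 from rfl, fun h => level_of_adj (restNet_adj_ne_zero_iff.1 h)⟩

variable [Fintype {v : ℕ // height net v ≤ k}]

lemma level_lt_card (v : Sk) : level v < Fintype.card Sk := by
  have hmem (i : Fin (k + 1)) : height net (3 * (i / 2) + i % 2) ≤ k :=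
    height_le_of_level_le (by unfold level; omega)
  have := Fintype.card_le_of_injective (fun i => (⟨_, hmem i⟩ : Sk)) fun i j h => by
    simp only [Subtype.mk.injEq] at h
    omega
  simp only [Fintype.card_fin] at this
  have := level_le v
  omega

open Classical in
lemma outDeg_restNet_of_level_lt {u : Sk} (hu : level u < k) :
    outDeg (restNet net k) u = (children u).card := by
  rw [outDeg_restNet, Finset.card_eq_sum_ones]
  refine (sum_subtype_eq_sum_of_support (children u) (fun m => if Adj u m then 1 else 0)
    ?_ ?_).trans (Finset.sum_congr rfl fun m hm => if_pos (mem_children.1 hm))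
  · intro m hm
    exact height_le_of_level_le (by rw [level_of_adj (mem_children.1 hm)]; omega)
  · intro m _ hm
    exact if_neg (mt mem_children.2 hm)

lemma outDeg_restNet_of_level_eq {u : Sk} (hu : level u = k) : outDeg (restNet net k) u = 0 := by
  rw [outDeg_restNet]
  refine Finset.sum_eq_zero fun v _ => if_neg fun h => ?_
  have := level_of_adj h
  have := level_le v
  omega

lemma isLeaf_restNet_iff (v : Sk) : IsLeaf (restNet net k) v ↔ level v = k := by
  refine ⟨fun h => ?_, outDeg_restNet_of_level_eq⟩
  by_contra hne
  have := outDeg_restNet_of_level_lt (lt_of_le_of_ne (level_le v) hne)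
  rw [IsLeaf] at h
  rw [h, card_children] at this
  split_ifs at this

open Classical in
lemma pathProb_restNet (v : Sk) : pathProb (restNet net k) (level v) v = visitProb v := by
  obtain ⟨n, hn⟩ := v
  induction n using Nat.strong_induction_on with
  | _ n ih =>
  rcases eq_or_ne n 0 with rfl | hn0
  · rw [show level 0 = 0 from rfl, pathProb_zero,
      if_pos (Subtype.ext rfl : (restNet net k).root = ⟨0, hn⟩)]
    rfl
  rw [isGrading_restNet.pathProb_eq_sum fun h => hn0 (congrArg Subtype.val h)]
  calc ∑ u : Sk, pathProb (restNet net k) (level u) u * edgeProb (restNet net k) u ⟨n, hn⟩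
      = ∑ u : Sk, if Adj u n then (2⁻¹ : ℝ) else 0 := by
        refine Finset.sum_congr rfl fun u _ => ?_
        rw [edgeProb_restNet]
        by_cases hu : Adj u n
        · have hlt := level_of_adj hu
          have : level n ≤ k := level_le ⟨n, hn⟩
          rw [if_pos hu, if_pos (show net.adj u (⟨n, hn⟩ : Sk) from hu),
            ih u (lt_of_adj hu) u.2, outDeg_restNet_of_level_lt (by omega),
            ← visitProb_div_card_children, div_eq_mul_inv]
        · rw [if_neg hu, if_neg (show ¬net.adj u (⟨n, hn⟩ : Sk) from hu), mul_zero]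
    _ = ∑ m ∈ parents n, if Adj m n then (2⁻¹ : ℝ) else 0 := by
        refine sum_subtype_eq_sum_of_support _
          (fun m => if Adj m n then (2⁻¹ : ℝ) else 0) ?_ ?_
        · intro m hm
          have := level_of_adj ((mem_parents hn0).1 hm)
          have : level n ≤ k := level_le ⟨n, hn⟩
          exact height_le_of_level_le (by omega)
        · intro m _ hm
          exact if_neg (mt (mem_parents hn0).2 hm)
    _ = visitProb n := by
        rw [Finset.sum_ite_of_true fun m hm => (mem_parents hn0).1 hm, Finset.sum_const,
          nsmul_eq_mul, visitProb_eq_card_parents_div_two hn0, div_eq_mul_inv]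

lemma pvisit_restNet (v : Sk) : pvisit (restNet net k) v = visitProb v :=
  (isGrading_restNet.pvisit_eq_pathProb (level_lt_card v)).trans (pathProb_restNet v)

open Classical in
lemma B2_restNet_eq_sum_levelSet :
    B2 (restNet net k) = -∑ n ∈ levelSet k, visitProb n * Real.logb 2 (visitProb n) := by
  rw [B2, Finset.sum_filter]
  congr 1
  refine (Finset.sum_congr rfl fun v _ => ?_).trans (sum_subtype_eq_sum_of_support (levelSet k)
    (fun n => if level n = k then visitProb n * Real.logb 2 (visitProb n) else 0) ?_ ?_) |>.trans
    (Finset.sum_ite_of_true (fun n hn => mem_levelSet.1 hn) _ _)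
  · simp only [isLeaf_restNet_iff, pvisit_restNet]
  · exact fun n hn => height_le_of_level_le (mem_levelSet.1 hn).le
  · exact fun n _ hn => if_neg (mt mem_levelSet.2 hn)

lemma B2_restNet : B2 (restNet net k) = if Odd k then 1 else 0 := by
  rw [B2_restNet_eq_sum_levelSet]
  obtain ⟨m, rfl | rfl⟩ := Nat.even_or_odd' k
  · simp [levelSet, visitProb]
  · rw [levelSet, if_neg (by simp), Finset.sum_pair (by omega)]
    rw [visitProb, visitProb, if_neg (by omega), if_neg (by omega), Real.logb_inv,
      Real.logb_self_eq_one one_lt_two]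
    norm_num

end Restriction

end DiamondChain

/-- **Theorem.** There is an infinite phylogenetic network `G` such that
`B₂([G]_k) = 1` when `k` is odd and `B₂([G]_k) = 0` when `k` is even; in particular
`(B₂([G]_k))_k` does not converge. -/
theorem exists_net_B2_restriction_oscillates :
    ∃ (V : Type) (_ : Countable V) (G : INet V), Infinite V ∧ IsPhyloNet G ∧
      ∀ (k : ℕ) [Fintype {v : V // height G v ≤ k}],
        B2 (restNet G k) = if Odd k then 1 else 0 := by
  refine ⟨ℕ, inferInstance, DiamondChain.net, inferInstance, DiamondChain.isPhyloNet_net, ?_⟩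
  intro k _
  exact DiamondChain.B2_restNet

end GalledB2
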